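/- For every k ≥ 1, there are exactly 2^k single-rooted minimal words of height k, and exactly 2^k double-rooted minimal words of height k. -/

import Mathlib

/-!
Every nonempty word `u` over `{1, 2}` has exactly two shortest primitives: the two complementary words
whose run-length encoding is `u` with a `1` added at each end of `u` that equals `1`. A minimal
word of height `k + 1 ≥ 2` is therefore one of the two shortest primitives of its derivative,
which is a minimal word of height `k` with the same root, and conversely both shortest primitives
of such a word are minimal. So `D` is two-to-one from minimal words of height `k + 1` onto those of
height `k`, root length fixed, and the count `2 ^ k` follows from the height-one words
`1, 2` and `12, 21`.
-/

namespace CInfWords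

open scoped Classical

/-- Run-length encoding Δ of a word. -/
def rle : List ℕ → List ℕ
  | [] => []
  | [_] => [1]
  | a :: b :: l =>
    if a = b then
      match rle (b :: l) with
      | [] => [1]
      | c :: r => (c + 1) :: r
    else 1 :: rle (b :: l)

/-- Erase a leading `1`, if any. -/
def trim1 : List ℕ → List ℕ
  | 1 :: l => l
  | l => l

/-- The derivative `D`: the run-length encoding with the first and/or the last
symbol erased when they are equal to `1`. -/
def D (w : List ℕ) : List ℕ := trim1 ((trim1 (rle w).reverse).reverse)

/-- Words over Σ = {1,2}. -/
def IsWord (w : List ℕ) : Prop := ∀ x ∈ w, x = 1 ∨ x = 2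

/-- Words over Σ₀ = {0,1,2}. -/
def IsWord0 (w : List ℕ) : Prop := ∀ x ∈ w, x = 0 ∨ x = 1 ∨ x = 2

/-- Σ₀^{++}: words over Σ₀ that are empty or begin with a nonzero symbol. -/
def Spp (w : List ℕ) : Prop := IsWord0 w ∧ (w = [] ∨ w.headI ≠ 0)

/-- C^∞-words: every iterated derivative is a word over Σ = {1,2}. -/
def Cinf (w : List ℕ) : Prop := ∀ k, IsWord (D^[k] w)

/-- The height of a C^∞-word: the least k with D^[k] w = ε. -/
noncomputable def height (w : List ℕ) : ℕ := sInf {k | D^[k] w = []}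

/-- The root of a C^∞-word of height k > 0: its (k-1)-st derivative. -/
noncomputable def root (w : List ℕ) : List ℕ := D^[height w - 1] w

/-- `v` is a primitive of `w`. -/
def Primitive (v w : List ℕ) : Prop := IsWord v ∧ D v = w

/-- The complement: swap 1's and 2's. -/
def compl (w : List ℕ) : List ℕ := w.map (fun x => 3 - x)

/-- Minimal C^∞-words: every derivative is a shortest primitive of the next one. -/
def Minimal (w : List ℕ) : Prop :=
  Cinf w ∧ 0 < height w ∧
    ∀ j, j + 2 ≤ height w → ∀ v, Primitive v (D^[j+1] w) → (D^[j] w).length ≤ v.length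

/-- Maximal C^∞-words: every derivative is a longest primitive of the next one. -/
def Maximal (w : List ℕ) : Prop :=
  Cinf w ∧ 0 < height w ∧
    ∀ j, j + 2 ≤ height w → ∀ v, Primitive v (D^[j+1] w) → v.length ≤ (D^[j] w).length

def LeftMinimal (w : List ℕ) : Prop := ∃ v, Minimal v ∧ w <+: v
def RightMinimal (w : List ℕ) : Prop := ∃ v, Minimal v ∧ w <:+ v
def LeftMaximal (w : List ℕ) : Prop := ∃ v, Maximal v ∧ w <+: v
def RightMaximal (w : List ℕ) : Prop := ∃ v, Maximal v ∧ w <:+ v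

/-- Single-rooted minimal words. -/
def SRMin (w : List ℕ) : Prop := Minimal w ∧ (root w).length = 1

/-- Double-rooted minimal words. -/
def DRMin (w : List ℕ) : Prop := Minimal w ∧ (root w).length = 2

/-- The left frontier Ψ(w). -/
noncomputable def psi (w : List ℕ) : List ℕ :=
  (List.range (height w)).map fun i =>
    if i = 0 then w.getD 0 0
    else if (D^[i] w).getD 0 0 = 2 ∧ (D^[i-1] w).getD 0 0 ≠ (D^[i-1] w).getD 1 0
      then 0
    else (D^[i] w).getD 0 0

/-- The single-rooted minimal word with left frontier U (if it exists). -/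
noncomputable def srmOf (U : List ℕ) : List ℕ :=
  if h : ∃ w, SRMin w ∧ psi w = U then h.choose else []

/-- The double-rooted minimal word with left frontier U (if it exists). -/
noncomputable def drmOf (U : List ℕ) : List ℕ :=
  if h : ∃ w, DRMin w ∧ psi w = U then h.choose else []

/-- Γs: the right frontier of the single-rooted minimal word with left frontier U. -/
noncomputable def Gs (U : List ℕ) : List ℕ := psi (srmOf U).reverse

/-- Γd: the right frontier of the double-rooted minimal word with left frontier U. -/
noncomputable def Gd (U : List ℕ) : List ℕ := psi (drmOf U).reverse

/-- Θ = Γs ∘ Γd. -/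
noncomputable def Th (U : List ℕ) : List ℕ := Gs (Gd U)

/-- Π = Γd ∘ Γs. -/
noncomputable def Pp (U : List ℕ) : List ℕ := Gd (Gs U)

/-- One step in the graph G: from node U, the edge labeled 1 goes to U·1, the edge
labeled 2 goes to U·2, and the edge labeled 0 goes to Θ(U)·2. -/
noncomputable def step (U : List ℕ) (a : ℕ) : List ℕ :=
  if a = 1 then U ++ [1] else if a = 2 then U ++ [2] else Th U ++ [2]

/-- The endpoint of the path in G starting at the origin ε and labeled by W. -/
noncomputable def pathEnd (W : List ℕ) : List ℕ := W.foldl step []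

/-- W ∈ Σ₀^{++} labels a directed path in G from ε to U. -/
def LabelsPath (W U : List ℕ) : Prop := Spp W ∧ pathEnd W = U

/-- ‖U‖: the number of words in Σ₀^{++} labeling a path in G from ε to U. -/
noncomputable def normG (U : List ℕ) : ℕ := {W | LabelsPath W U}.ncard

/-- |U|: the length of the single-rooted minimal word with left frontier U. -/
noncomputable def len (U : List ℕ) : ℕ := (srmOf U).length

/-- u is the minimal part of w: the first (leftmost-occurring) factor of w that
is a single-rooted minimal word of the same height as w. -/
def IsMinPart (u w : List ℕ) : Prop :=
  ∃ s t, w = s ++ u ++ t ∧ SRMin u ∧ height u = height w ∧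
    ∀ u' s' t', w = s' ++ u' ++ t' → SRMin u' → height u' = height w →
      s.length ≤ s'.length

@[simp] lemma trim1_one_cons (l : List ℕ) : trim1 (1 :: l) = l := rfl

lemma trim1_eq_iff {l u : List ℕ} : trim1 l = u ↔ l = 1 :: u ∨ (l = u ∧ u.head? ≠ some 1) := by
  rcases l with _ | ⟨n, t⟩
  · rcases u with _ | ⟨m, u⟩ <;> simp [trim1]
  · by_cases hn : n = 1
    · subst hn
      simp only [trim1_one_cons]
      constructor
      · rintro rfl; simp
      · rintro (h | ⟨rfl, h⟩) <;> simp_all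
    · have : trim1 (n :: t) = n :: t := by
        rcases n with _ | _ | n <;> simp_all [trim1]
      rw [this]
      constructor
      · rintro rfl; simp [hn]
      · rintro (h | ⟨h, -⟩) <;> simp_all

lemma rle_cons_cons (a b : ℕ) (l : List ℕ) :
    rle (a :: b :: l) = if a = b then
      match rle (b :: l) with
      | [] => [1]
      | c :: r => (c + 1) :: r
    else 1 :: rle (b :: l) := by
  rw [rle]

lemma rle_replicate_append {n a : ℕ} {l : List ℕ} (hn : 0 < n) (hl : l.head? ≠ some a) :
    rle (List.replicate n a ++ l) = n :: rle l := by
  induction n, hn using Nat.le_induction with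
  | base =>
    rcases l with _ | ⟨b, t⟩
    · rfl
    · simp only [List.head?_cons, ne_eq, Option.some.injEq] at hl
      simp [rle_cons_cons, Ne.symm hl]
  | succ n hn ih =>
    obtain ⟨m, rfl⟩ := Nat.exists_eq_add_of_lt hn
    simp only [List.replicate_succ, List.cons_append] at ih ⊢
    rw [rle_cons_cons, if_pos rfl, ih]

def ofRuns (a : ℕ) : List ℕ → List ℕ
  | [] => []
  | n :: l => List.replicate n a ++ ofRuns (3 - a) l

lemma length_ofRuns (a : ℕ) (l : List ℕ) : (ofRuns a l).length = l.sum := by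
  induction l generalizing a with
  | nil => rfl
  | cons n t ih => simp [ofRuns, ih]

lemma isWord_ofRuns {a : ℕ} (ha : a = 1 ∨ a = 2) (l : List ℕ) : IsWord (ofRuns a l) := by
  induction l generalizing a with
  | nil => simp [IsWord, ofRuns]
  | cons n t ih =>
    intro x hx
    rcases List.mem_append.mp hx with hx | hx
    · rw [List.eq_of_mem_replicate hx]; exact ha
    · exact ih (by omega) x hx

lemma head?_ofRuns_cons (a : ℕ) {n : ℕ} (hn : 0 < n) (l : List ℕ) :
    (ofRuns a (n :: l)).head? = some a := by
  obtain ⟨m, rfl⟩ := Nat.exists_eq_add_of_lt hn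
  simp [ofRuns, List.replicate_succ]

lemma rle_ofRuns {a : ℕ} (ha : a = 1 ∨ a = 2) {l : List ℕ} (hl : ∀ n ∈ l, 0 < n) :
    rle (ofRuns a l) = l := by
  induction l generalizing a with
  | nil => rfl
  | cons n t ih =>
    have ht : ∀ m ∈ t, 0 < m := fun m hm => hl m (List.mem_cons_of_mem n hm)
    rw [ofRuns, rle_replicate_append (hl n List.mem_cons_self), ih (by omega) ht]
    rcases t with _ | ⟨m, t⟩
    · simp [ofRuns]
    · rw [head?_ofRuns_cons _ (ht m List.mem_cons_self)]
      simp only [ne_eq, Option.some.injEq]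
      omega

lemma ofRuns_headI_rle {v : List ℕ} (hv : IsWord v) : ofRuns v.headI (rle v) = v := by
  induction v with
  | nil => rfl
  | cons a t ih =>
    have ha : a = 1 ∨ a = 2 := hv a List.mem_cons_self
    rcases t with _ | ⟨b, l⟩
    · simp [rle, ofRuns]
    have hb : b = 1 ∨ b = 2 := hv b (by simp)
    have ihb := ih fun x hx => hv x (List.mem_cons_of_mem a hx)
    rw [List.headI_cons] at ihb ⊢
    by_cases hab : a = b
    · subst hab
      rcases hr : rle (a :: l) with _ | ⟨c, r⟩
      · simp [hr, ofRuns] at ihb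
      · rw [hr, ofRuns] at ihb
        rw [rle_cons_cons, if_pos rfl, hr, ofRuns, List.replicate_succ, List.cons_append, ihb]
    · have h3 : 3 - a = b := by omega
      rw [rle_cons_cons, if_neg hab, ofRuns, h3, ihb]
      rfl

lemma length_eq_sum_rle {v : List ℕ} (hv : IsWord v) : v.length = (rle v).sum := by
  conv_lhs => rw [← ofRuns_headI_rle hv]
  exact length_ofRuns _ _

lemma reverse_trim1_reverse_eq_iff {l u : List ℕ} :
    (trim1 l.reverse).reverse = u ↔ l = u ++ [1] ∨ (l = u ∧ u.getLast? ≠ some 1) := by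
  rw [List.reverse_eq_iff, trim1_eq_iff, List.head?_reverse, List.reverse_eq_cons_iff,
    List.reverse_inj, List.reverse_reverse]

lemma D_eq_iff {w u : List ℕ} : D w = u ↔
    (rle w = 1 :: u ++ [1] ∨ (rle w = 1 :: u ∧ (1 :: u).getLast? ≠ some 1)) ∨
      ((rle w = u ++ [1] ∨ (rle w = u ∧ u.getLast? ≠ some 1)) ∧ u.head? ≠ some 1) := by
  rw [D, trim1_eq_iff, reverse_trim1_reverse_eq_iff, reverse_trim1_reverse_eq_iff, List.cons_append]

/-- The shortest run-length sequence that `D` trims back to `u`: an end of `u` equal to `1`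
must be protected by an extra run of length `1`, which `D` erases instead. -/
def pad (u : List ℕ) : List ℕ :=
  (if u.head? = some 1 then [1] else []) ++ u ++ (if u.getLast? = some 1 then [1] else [])

lemma D_eq_of_rle_eq_pad {w u : List ℕ} (h : rle w = pad u) : D w = u := by
  rw [D_eq_iff, h, pad]
  rcases u with _ | ⟨x, u⟩
  · simp
  · split_ifs <;> simp_all

lemma rle_eq_pad_or_sum_lt {w u : List ℕ} (h : D w = u) :
    rle w = pad u ∨ (pad u).sum < (rle w).sum := by
  rw [D_eq_iff] at h
  rcases h with (h | ⟨h, hl⟩) | ⟨h | ⟨h, hl⟩, hh⟩ <;> rw [h, pad] <;> split_ifs <;>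
    simp_all [List.getLast?_cons]
  omega

lemma pos_of_mem_pad {u : List ℕ} (hu : IsWord u) : ∀ n ∈ pad u, 0 < n := by
  intro n hn
  simp only [pad, List.mem_append] at hn
  rcases hn with (hn | hn) | hn
  · split_ifs at hn <;> simp_all
  · rcases hu n hn with rfl | rfl <;> norm_num
  · split_ifs at hn <;> simp_all

def shortestPrimitive (a : ℕ) (u : List ℕ) : List ℕ := ofRuns a (pad u)

lemma length_shortestPrimitive (a : ℕ) (u : List ℕ) :
    (shortestPrimitive a u).length = (pad u).sum :=
  length_ofRuns a _

lemma primitive_shortestPrimitive {a : ℕ} (ha : a = 1 ∨ a = 2) {u : List ℕ} (hu : IsWord u) :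
    Primitive (shortestPrimitive a u) u :=
  ⟨isWord_ofRuns ha _, D_eq_of_rle_eq_pad (rle_ofRuns ha (pos_of_mem_pad hu))⟩

lemma length_shortestPrimitive_le (a : ℕ) {u v : List ℕ} (hv : Primitive v u) :
    (shortestPrimitive a u).length ≤ v.length := by
  rw [length_shortestPrimitive, length_eq_sum_rle hv.1]
  rcases rle_eq_pad_or_sum_lt hv.2 with h | h
  · rw [h]
  · exact h.le

lemma eq_shortestPrimitive_of_length_le {u v : List ℕ} (hv : Primitive v u)
    (hlen : v.length ≤ (pad u).sum) : v = shortestPrimitive 1 u ∨ v = shortestPrimitive 2 u := by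
  rw [length_eq_sum_rle hv.1] at hlen
  have hrle : rle v = pad u := (rle_eq_pad_or_sum_lt hv.2).resolve_right (by omega)
  have hv_eq : v = shortestPrimitive v.headI u := by
    rw [shortestPrimitive, ← hrle, ofRuns_headI_rle hv.1]
  rcases v with _ | ⟨x, t⟩
  · left; rw [shortestPrimitive, ← hrle]; rfl
  · rcases hv.1 x List.mem_cons_self with hx | hx <;> rw [hv_eq] <;> simp [hx]

lemma head?_shortestPrimitive (a : ℕ) {u : List ℕ} (hu : IsWord u) (hne : u ≠ []) :
    (shortestPrimitive a u).head? = some a := by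
  obtain ⟨n, l, hnl⟩ : ∃ n l, pad u = n :: l := List.exists_cons_of_ne_nil (by simp [pad, hne])
  rw [shortestPrimitive, hnl]
  exact head?_ofRuns_cons a (pos_of_mem_pad hu n (by simp [hnl])) l

@[simp] lemma iterate_D_nil (n : ℕ) : D^[n] [] = [] :=
  Function.iterate_fixed rfl n

@[simp] lemma height_nil : height [] = 0 :=
  Nat.sInf_eq_zero.mpr (Or.inl rfl)

lemma iterate_D_height {w : List ℕ} (h : 0 < height w) : D^[height w] w = [] :=
  Nat.sInf_mem (Nat.nonempty_of_pos_sInf h)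

lemma height_eq_height_D_add_one {w : List ℕ} (hw : w ≠ []) (hfin : ∃ n, D^[n] w = []) :
    height w = height (D w) + 1 := by
  have hpos : 1 ≤ height w := by
    rw [Nat.one_le_iff_ne_zero, height, Ne, Nat.sInf_eq_zero]
    simpa [Set.eq_empty_iff_forall_notMem, hw] using hfin
  unfold height at hpos ⊢
  exact (Nat.sInf_add hpos).symm

lemma height_eq_height_D_add_one_of_pos {w : List ℕ} (hw : w ≠ []) (h : 0 < height (D w)) :
    height w = height (D w) + 1 :=
  height_eq_height_D_add_one hw ⟨height (D w) + 1, iterate_D_height h⟩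

lemma root_eq_root_D {w : List ℕ} (hw : w ≠ []) (h : 0 < height (D w)) :
    root w = root (D w) := by
  obtain ⟨k, hk⟩ := Nat.exists_eq_add_of_lt h
  rw [root, root, height_eq_height_D_add_one_of_pos hw h, hk]
  rfl

lemma cinf_iff {w : List ℕ} : Cinf w ↔ IsWord w ∧ Cinf (D w) :=
  ⟨fun h => ⟨h 0, fun k => h (k + 1)⟩, fun h k => k.casesOn h.1 fun k => h.2 k⟩

lemma minimal_iff {w : List ℕ} (hw : w ≠ []) (h : 0 < height (D w)) :
    Minimal w ↔
      IsWord w ∧ Minimal (D w) ∧ ∀ v, Primitive v (D w) → w.length ≤ v.length := by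
  have hheight := height_eq_height_D_add_one_of_pos hw h
  rw [Minimal, Minimal, cinf_iff (w := w), hheight]
  simp only [h, Nat.succ_pos, true_and]
  constructor
  · rintro ⟨⟨hword, hcinf⟩, hmin⟩
    exact ⟨hword, ⟨hcinf, fun j hj => hmin (j + 1) (by omega)⟩, hmin 0 (by omega)⟩
  · rintro ⟨hword, ⟨hcinf, hmin⟩, hshort⟩
    refine ⟨⟨hword, hcinf⟩, fun j hj => ?_⟩
    rcases j with _ | j
    · exact hshort
    · exact hmin j (by omega)

lemma minimal_and_height_eq_one_iff {w : List ℕ} :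
    Minimal w ∧ height w = 1 ↔ IsWord w ∧ w ≠ [] ∧ D w = [] := by
  constructor
  · rintro ⟨⟨hcinf, hpos, -⟩, hheight⟩
    refine ⟨hcinf 0, fun hnil => by simp [hnil] at hheight, ?_⟩
    simpa [hheight] using iterate_D_height hpos
  · rintro ⟨hword, hw, hD⟩
    have hheight : height w = 1 := by
      rw [height_eq_height_D_add_one hw ⟨1, hD⟩, hD, height_nil]
    refine ⟨⟨cinf_iff.mpr ⟨hword, ?_⟩, by omega, fun j hj => by omega⟩, hheight⟩
    simp [Cinf, hD, IsWord]

lemma Minimal.isWord {w : List ℕ} (h : Minimal w) : IsWord w := h.1 0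

def minimalWords (k r : ℕ) : Set (List ℕ) :=
  {w | Minimal w ∧ height w = k ∧ (root w).length = r}

section minimalWords

variable {k r : ℕ}

lemma ne_nil_of_mem_minimalWords (hk : 1 ≤ k) {w : List ℕ} (hw : w ∈ minimalWords k r) :
    w ≠ [] := by
  rintro rfl
  simpa using hk.trans_eq hw.2.1.symm

lemma shortestPrimitive_mem_minimalWords_succ (hk : 1 ≤ k) {a : ℕ} (ha : a = 1 ∨ a = 2)
    {u : List ℕ} (hu : u ∈ minimalWords k r) : shortestPrimitive a u ∈ minimalWords (k + 1) r := by
  have hne : shortestPrimitive a u ≠ [] := fun hnil => by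
    simpa [hnil] using head?_shortestPrimitive a hu.1.isWord (ne_nil_of_mem_minimalWords hk hu)
  obtain ⟨hmin, hheight, hroot⟩ := hu
  have hprim := primitive_shortestPrimitive ha hmin.isWord
  have hpos : 0 < height (D (shortestPrimitive a u)) := by rw [hprim.2]; omega
  refine ⟨(minimal_iff hne hpos).mpr ⟨hprim.1, ?_, ?_⟩, ?_, ?_⟩
  · rwa [hprim.2]
  · intro v hv
    rw [hprim.2] at hv
    exact length_shortestPrimitive_le a hv
  · rw [height_eq_height_D_add_one_of_pos hne hpos, hprim.2, hheight]
  · rwa [root_eq_root_D hne hpos, hprim.2]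

lemma D_mem_minimalWords_of_mem_succ (hk : 1 ≤ k) {w : List ℕ}
    (hw : w ∈ minimalWords (k + 1) r) :
    D w ∈ minimalWords k r ∧ (w = shortestPrimitive 1 (D w) ∨ w = shortestPrimitive 2 (D w)) := by
  obtain ⟨hmin, hheight, hroot⟩ := hw
  have hne := ne_nil_of_mem_minimalWords (by omega) ⟨hmin, hheight, hroot⟩
  have hheightD : height (D w) = k := by
    have := height_eq_height_D_add_one hne ⟨_, iterate_D_height hmin.2.1⟩
    omega
  have hpos : 0 < height (D w) := by omega
  obtain ⟨hword, hminD, hshort⟩ := (minimal_iff hne hpos).mp hmin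
  refine ⟨⟨hminD, hheightD, by rwa [← root_eq_root_D hne hpos]⟩, ?_⟩
  apply eq_shortestPrimitive_of_length_le ⟨hword, rfl⟩
  rw [← length_shortestPrimitive 1]
  exact hshort _ (primitive_shortestPrimitive (Or.inl rfl) hminD.isWord)

lemma minimalWords_succ (hk : 1 ≤ k) :
    minimalWords (k + 1) r =
      shortestPrimitive 1 '' minimalWords k r ∪ shortestPrimitive 2 '' minimalWords k r := by
  ext w
  constructor
  · intro hw
    obtain ⟨hD, h | h⟩ := D_mem_minimalWords_of_mem_succ hk hw
    · exact Or.inl ⟨D w, hD, h.symm⟩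
    · exact Or.inr ⟨D w, hD, h.symm⟩
  · rintro (⟨u, hu, rfl⟩ | ⟨u, hu, rfl⟩)
    · exact shortestPrimitive_mem_minimalWords_succ hk (Or.inl rfl) hu
    · exact shortestPrimitive_mem_minimalWords_succ hk (Or.inr rfl) hu

lemma encard_minimalWords_succ (hk : 1 ≤ k) :
    (minimalWords (k + 1) r).encard = 2 * (minimalWords k r).encard := by
  have hinj : ∀ {a}, a = 1 ∨ a = 2 → Set.InjOn (shortestPrimitive a) (minimalWords k r) :=
    fun ha u hu v hv huv => by
      rw [← (primitive_shortestPrimitive ha hu.1.isWord).2, huv,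
        (primitive_shortestPrimitive ha hv.1.isWord).2]
  have hdisj : Disjoint (shortestPrimitive 1 '' minimalWords k r)
      (shortestPrimitive 2 '' minimalWords k r) := by
    rw [Set.disjoint_left]
    rintro _ ⟨u, hu, rfl⟩ ⟨v, hv, huv⟩
    have h1 := head?_shortestPrimitive 1 hu.1.isWord (ne_nil_of_mem_minimalWords hk hu)
    rw [← huv, head?_shortestPrimitive 2 hv.1.isWord (ne_nil_of_mem_minimalWords hk hv)] at h1
    simp at h1
  rw [minimalWords_succ hk, Set.encard_union_eq hdisj, (hinj (Or.inl rfl)).encard_image,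
    (hinj (Or.inr rfl)).encard_image, two_mul]

lemma encard_minimalWords (hk : 1 ≤ k) (h₁ : (minimalWords 1 r).encard = 2) :
    (minimalWords k r).encard = 2 ^ k := by
  induction k, hk using Nat.le_induction with
  | base => simpa using h₁
  | succ k hk ih => rw [encard_minimalWords_succ hk, ih, pow_succ, mul_comm]

end minimalWords

lemma minimalWords_one (r : ℕ) :
    minimalWords 1 r = {w | IsWord w ∧ w ≠ [] ∧ D w = [] ∧ w.length = r} := by
  ext w
  simp only [minimalWords, Set.mem_ofPred_eq]
  constructor
  · rintro ⟨hmin, hheight, hroot⟩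
    obtain ⟨hword, hne, hD⟩ := minimal_and_height_eq_one_iff.mp ⟨hmin, hheight⟩
    rw [root, hheight] at hroot
    exact ⟨hword, hne, hD, hroot⟩
  · rintro ⟨hword, hne, hD, hlen⟩
    obtain ⟨hmin, hheight⟩ := minimal_and_height_eq_one_iff.mpr ⟨hword, hne, hD⟩
    exact ⟨hmin, hheight, by rw [root, hheight]; exact hlen⟩

lemma minimalWords_one_one : minimalWords 1 1 = {[1], [2]} := by
  ext w
  rw [minimalWords_one]
  constructor
  · rintro ⟨hword, -, -, hlen⟩
    obtain ⟨x, rfl⟩ := List.length_eq_one_iff.mp hlen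
    rcases hword x List.mem_cons_self with rfl | rfl <;> simp
  · rintro (rfl | rfl) <;> refine ⟨?_, by simp, rfl, rfl⟩ <;> simp [IsWord]

lemma minimalWords_one_two : minimalWords 1 2 = {[1, 2], [2, 1]} := by
  ext w
  rw [minimalWords_one]
  constructor
  · rintro ⟨hword, -, hD, hlen⟩
    obtain ⟨x, y, rfl⟩ := List.length_eq_two.mp hlen
    rcases hword x (by simp) with rfl | rfl <;> rcases hword y (by simp) with rfl | rfl <;>
      simp_all [D, rle, trim1]
  · rintro (rfl | rfl) <;> refine ⟨?_, by simp, rfl, rfl⟩ <;> simp [IsWord]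

/-- for every k ≥ 1 there are exactly 2^k single-rooted minimal words
of height k and exactly 2^k double-rooted minimal words of height k. -/
theorem count_minimal_words (k : ℕ) (hk : 1 ≤ k) :
    {w | SRMin w ∧ height w = k}.ncard = 2 ^ k ∧
    {w | DRMin w ∧ height w = k}.ncard = 2 ^ k := by
  have hsingle : {w | SRMin w ∧ height w = k} = minimalWords k 1 := by
    ext w
    simp only [SRMin, minimalWords, Set.mem_ofPred_eq]
    tauto
  have hdouble : {w | DRMin w ∧ height w = k} = minimalWords k 2 := by
    ext w
    simp only [DRMin, minimalWords, Set.mem_ofPred_eq]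
    tauto
  rw [hsingle, hdouble, Set.ncard_def, Set.ncard_def,
    encard_minimalWords hk (by rw [minimalWords_one_one]; exact Set.encard_pair (by simp)),
    encard_minimalWords hk (by rw [minimalWords_one_two]; exact Set.encard_pair (by simp))]
  simp

end CInfWords
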